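/- Let G be a group with finite generating set X and H a K-quasiconvex subgroup. Then H with the restricted word metric from G is quasi-isometrically embedded: for every h ∈ H, the length of h as a product of generators of H from the set S of elements of H of word length at most 2K+1 is at most the word length of h in G. -/
import Mathlib


/-- Evaluate a word over `X ∪ X⁻¹` (letters indexed by `Fin k`, with a sign bit)
in the group `G`, where `ρ : Fin k → G` lists the generators. -/
def evalWord {G : Type*} [Group G] {k : ℕ} (ρ : Fin k → G)
    (w : List (Fin k × Bool)) : G :=
  (w.map fun p => if p.2 then ρ p.1 else (ρ p.1)⁻¹).prod

/-- Word length of `g` with respect to the generating set `ρ`. -/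
noncomputable def wl {G : Type*} [Group G] {k : ℕ} (ρ : Fin k → G) (g : G) : ℕ :=
  sInf {n | ∃ w : List (Fin k × Bool), evalWord ρ w = g ∧ w.length = n}

/-- `ρ` is a generating set of `G`. -/
def Generates {G : Type*} [Group G] {k : ℕ} (ρ : Fin k → G) : Prop :=
  Subgroup.closure (Set.range ρ) = ⊤

/-- `w` is the label of a geodesic in the Cayley graph from `a` to `b`. -/
def IsGeodesicWord {G : Type*} [Group G] {k : ℕ} (ρ : Fin k → G)
    (a b : G) (w : List (Fin k × Bool)) : Prop :=
  evalWord ρ w = a⁻¹ * b ∧ w.length = wl ρ (a⁻¹ * b)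

/-- `v` is a vertex on the path starting at `a` labeled by `w`. -/
def VertexOn {G : Type*} [Group G] {k : ℕ} (ρ : Fin k → G)
    (a : G) (w : List (Fin k × Bool)) (v : G) : Prop :=
  ∃ i ≤ w.length, v = a * evalWord ρ (w.take i)

/-- `H` is `K`-quasiconvex: every vertex on a geodesic with endpoints in `H`
is within distance `K` of `H`. -/
def IsQuasiconvex {G : Type*} [Group G] {k : ℕ} (ρ : Fin k → G)
    (H : Subgroup G) (K : ℕ) : Prop :=
  ∀ a ∈ H, ∀ b ∈ H, ∀ w, IsGeodesicWord ρ a b w →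
    ∀ v, VertexOn ρ a w v → ∃ h ∈ H, wl ρ (v⁻¹ * h) ≤ K

/-- `G` is `δ`-hyperbolic: geodesic triangles are `δ`-thin. -/
def IsHyperbolic {G : Type*} [Group G] {k : ℕ} (ρ : Fin k → G) (δ : ℕ) : Prop :=
  ∀ a b c : G, ∀ wab wbc wac,
    IsGeodesicWord ρ a b wab → IsGeodesicWord ρ b c wbc → IsGeodesicWord ρ a c wac →
    ∀ v, VertexOn ρ a wab v →
      ∃ u, (VertexOn ρ b wbc u ∨ VertexOn ρ a wac u) ∧ wl ρ (v⁻¹ * u) ≤ δ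

/-- The conjugate subgroup `g⁻¹ H g`. -/
def conjSub {G : Type*} [Group G] (g : G) (H : Subgroup G) : Subgroup G :=
  Subgroup.map (MulAut.conj g⁻¹).toMonoidHom H

section Aux
variable {G : Type*} [Group G] {k : ℕ} (ρ : Fin k → G)

lemma evalWord_append (w w' : List (Fin k × Bool)) :
    evalWord ρ (w ++ w') = evalWord ρ w * evalWord ρ w' := by
  simp [evalWord]

lemma evalWord_inv (w : List (Fin k × Bool)) :
    evalWord ρ ((w.map (fun p => (p.1, !p.2))).reverse) = (evalWord ρ w)⁻¹ := by
  induction w with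
  | nil => simp [evalWord]
  | cons p t ih =>
    rcases p with ⟨i, b⟩
    simp only [List.map_cons, List.reverse_cons]
    rw [evalWord_append, ih]
    have h1 : evalWord ρ ((⟨i, b⟩ : Fin k × Bool) :: t)
        = (if b then ρ i else (ρ i)⁻¹) * evalWord ρ t := by simp [evalWord]
    rw [h1, mul_inv_rev]
    cases b <;> simp [evalWord]

lemma exists_word (hgen : Generates ρ) (g : G) : ∃ w, evalWord ρ w = g := by
  have hg : g ∈ Subgroup.closure (Set.range ρ) := by rw [hgen]; trivial
  induction hg using Subgroup.closure_induction with
  | mem x hx =>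
    obtain ⟨i, rfl⟩ := hx
    exact ⟨[(i, true)], by simp [evalWord]⟩
  | one => exact ⟨[], by simp [evalWord]⟩
  | mul x y _ _ hx hy =>
    obtain ⟨w1, h1⟩ := hx; obtain ⟨w2, h2⟩ := hy
    exact ⟨w1 ++ w2, by rw [evalWord_append, h1, h2]⟩
  | inv x _ hx =>
    obtain ⟨w1, h1⟩ := hx
    exact ⟨(w1.map (fun p => (p.1, !p.2))).reverse, by rw [evalWord_inv, h1]⟩

lemma wl_le {w : List (Fin k × Bool)} {g : G} (h : evalWord ρ w = g) :
    wl ρ g ≤ w.length := Nat.sInf_le ⟨w, h, rfl⟩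

lemma wl_spec (hgen : Generates ρ) (g : G) :
    ∃ w, evalWord ρ w = g ∧ w.length = wl ρ g := by
  have hne : {n | ∃ w : List (Fin k × Bool), evalWord ρ w = g ∧ w.length = n}.Nonempty := by
    obtain ⟨w, hw⟩ := exists_word ρ hgen g
    exact ⟨w.length, w, hw, rfl⟩
  exact Nat.sInf_mem hne

lemma wl_one : wl ρ (1 : G) = 0 :=
  Nat.le_zero.mp (wl_le ρ (w := []) (by simp [evalWord]))

lemma wl_mul_le (hgen : Generates ρ) (a b : G) :
    wl ρ (a * b) ≤ wl ρ a + wl ρ b := by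
  obtain ⟨w1, h1, hl1⟩ := wl_spec ρ hgen a
  obtain ⟨w2, h2, hl2⟩ := wl_spec ρ hgen b
  calc wl ρ (a * b) ≤ (w1 ++ w2).length :=
        wl_le ρ (by rw [evalWord_append, h1, h2])
    _ = wl ρ a + wl ρ b := by rw [List.length_append, hl1, hl2]

lemma wl_inv_le (hgen : Generates ρ) (a : G) : wl ρ a⁻¹ ≤ wl ρ a := by
  obtain ⟨w1, h1, hl1⟩ := wl_spec ρ hgen a
  calc wl ρ a⁻¹ ≤ ((w1.map (fun p => (p.1, !p.2))).reverse).length :=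
        wl_le ρ (by rw [evalWord_inv, h1])
    _ = wl ρ a := by simpa using hl1

lemma telescope (c : ℕ → G) (n : ℕ) :
    ((List.range n).map fun i => (c i)⁻¹ * c (i+1)).prod = (c 0)⁻¹ * c n := by
  induction n with
  | zero => simp
  | succ n ih => rw [List.range_succ, List.map_append, List.prod_append, ih]; simp [mul_assoc]

end Aux

/-- Each `h` in a `K`-quasiconvex subgroup `H` is a product of at most `wl ρ h`
elements of `S ∪ S⁻¹`, where `S` is the set of elements of `H` of word length
at most `2K+1`. -/
theorem quasiconvex_qi_embedded
    {G : Type*} [Group G] {k : ℕ} (ρ : Fin k → G) (hgen : Generates ρ)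
    (H : Subgroup G) (K : ℕ) (hqc : IsQuasiconvex ρ H K) :
    ∀ h ∈ H, ∃ l : List G,
      (∀ x ∈ l, (x ∈ H ∧ wl ρ x ≤ 2 * K + 1) ∨ (x⁻¹ ∈ H ∧ wl ρ x⁻¹ ≤ 2 * K + 1)) ∧
      l.prod = h ∧ l.length ≤ wl ρ h := by
  intro h hH
  obtain ⟨w, hw, hwl⟩ := wl_spec ρ hgen h
  set n := wl ρ h with hn
  have hgeo : IsGeodesicWord ρ 1 h w := by
    constructor <;> simp [hw, hwl, hn]
  have hv : ∀ i, ∃ c, c ∈ H ∧ wl ρ ((evalWord ρ (w.take i))⁻¹ * c) ≤ K := by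
    intro i
    by_cases hi : i ≤ w.length
    · obtain ⟨c, hc, hcK⟩ :=
        hqc 1 H.one_mem h hH w hgeo (1 * evalWord ρ (w.take i)) ⟨i, hi, rfl⟩
      exact ⟨c, hc, by simpa using hcK⟩
    · refine ⟨h, hH, ?_⟩
      rw [List.take_of_length_le (le_of_not_ge hi), hw]
      simp [wl_one ρ]
  choose c hcH hcK using hv
  set d : ℕ → G := fun i => if i = 0 then 1 else if n ≤ i then h else c i with hd
  have hdH : ∀ i, d i ∈ H := by
    intro i
    simp only [hd]
    split_ifs
    · exact H.one_mem
    · exact hH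
    · exact hcH i
  have hdK : ∀ i ≤ n, wl ρ ((evalWord ρ (w.take i))⁻¹ * d i) ≤ K := by
    intro i hi
    simp only [hd]
    split_ifs with h0 h1
    · subst h0
      simp [evalWord, wl_one ρ]
    · have hin : i = n := le_antisymm hi h1
      subst hin
      rw [← hwl, List.take_length, hw]
      simp [wl_one ρ]
    · exact hcK i
  refine ⟨(List.range n).map fun i => (d i)⁻¹ * d (i+1), ?_, ?_, ?_⟩
  · intro x hx
    simp only [List.mem_map, List.mem_range] at hx
    obtain ⟨i, hi, rfl⟩ := hx
    left
    refine ⟨H.mul_mem (H.inv_mem (hdH i)) (hdH (i+1)), ?_⟩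
    have hilen : i < w.length := by rw [hwl]; exact hi
    have key : (d i)⁻¹ * d (i+1)
        = ((evalWord ρ (w.take i))⁻¹ * d i)⁻¹ *
          ((evalWord ρ (w.take i))⁻¹ * evalWord ρ (w.take (i+1))) *
          ((evalWord ρ (w.take (i+1)))⁻¹ * d (i+1)) := by group
    have h1 : wl ρ (((evalWord ρ (w.take i))⁻¹ * d i)⁻¹) ≤ K :=
      le_trans (wl_inv_le ρ hgen _) (hdK i (le_of_lt hi))
    have h2 : wl ρ ((evalWord ρ (w.take i))⁻¹ * evalWord ρ (w.take (i+1))) ≤ 1 := by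
      have hwi : w.take (i+1) = w.take i ++ [w[i]'hilen] := by
        rw [List.take_succ, List.getElem?_eq_getElem hilen]
        rfl
      rw [hwi, evalWord_append, inv_mul_cancel_left]
      simpa using wl_le ρ (w := [w[i]'hilen]) rfl
    have h3 : wl ρ ((evalWord ρ (w.take (i+1)))⁻¹ * d (i+1)) ≤ K := hdK (i+1) hi
    calc wl ρ ((d i)⁻¹ * d (i+1))
        ≤ wl ρ (((evalWord ρ (w.take i))⁻¹ * d i)⁻¹ *
            ((evalWord ρ (w.take i))⁻¹ * evalWord ρ (w.take (i+1)))) +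
          wl ρ ((evalWord ρ (w.take (i+1)))⁻¹ * d (i+1)) := by
          rw [key]; exact wl_mul_le ρ hgen _ _
      _ ≤ (wl ρ (((evalWord ρ (w.take i))⁻¹ * d i)⁻¹) +
            wl ρ ((evalWord ρ (w.take i))⁻¹ * evalWord ρ (w.take (i+1)))) +
          wl ρ ((evalWord ρ (w.take (i+1)))⁻¹ * d (i+1)) :=
          Nat.add_le_add_right (wl_mul_le ρ hgen _ _) _
      _ ≤ (K + 1) + K := by
          exact Nat.add_le_add (Nat.add_le_add h1 h2) h3
      _ = 2 * K + 1 := by ring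
  · rw [telescope]
    have hd0 : d 0 = 1 := by simp [hd]
    have hdn : d n = h := by
      by_cases h0 : n = 0
      · have hwnil : w = [] := List.length_eq_zero_iff.mp (by rw [hwl, h0])
        have : h = 1 := by rw [← hw, hwnil]; simp [evalWord]
        simp [hd, h0, this]
      · simp [hd, h0]
    rw [hd0, hdn]; simp
  · simp
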